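/- Let T be a binary tree and let w(T) := {σ ∈ List ℕ : v(σ) ∈ T} be its translation. Then w(T) is a tree on ℕ; for every q : ℕ → Bool with infinitely many ones, q ∈ [T] if and only if w(q) ∈ [w(T)]; and for every p : ℕ → ℕ, p ∈ [w(T)] if and only if v(p) ∈ [T]. -/

import Mathlib

/-!
Reading the binary tree `T` through `v` works because `v` is a prefix-respecting
encoding: the code of the first `n` entries of `p` is exactly the first
`∑_{i<n} p i + n` bits of `v p`, and these lengths are unbounded, so `p` passes
through `w(T)` iff `v p` passes through `T`. A sequence `q` with infinitely many ones
is `v (w q)`, since the partial sums of `w q` recover the positions of the ones of `q`;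
this reduces the second claim to the third.
-/

/-- A tree (over an alphabet `α`) is a nonempty set of finite sequences closed under
taking prefixes. -/
def IsTree {α : Type*} (T : Set (List α)) : Prop :=
  T.Nonempty ∧ ∀ σ ∈ T, ∀ τ : List α, τ <+: σ → τ ∈ T

/-- The body of a tree: the set of infinite sequences all of whose finite initial
segments belong to `T`. -/
def body {α : Type*} (T : Set (List α)) : Set (ℕ → α) :=
  {f | ∀ n : ℕ, List.ofFn (fun i : Fin n => f i) ∈ T}

/-- The translation of a finite sequence `σ = ⟨σ 0, …, σ (n-1)⟩ ∈ List ℕ` to the binary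
sequence `0^{σ 0} 1 0^{σ 1} 1 ⋯ 0^{σ (n-1)} 1 ∈ List Bool`. -/
def vList : List ℕ → List Bool
  | [] => []
  | n :: σ => List.replicate n false ++ true :: vList σ

open Classical in
/-- The translation `v : (ℕ → ℕ) → (ℕ → Bool)` mapping `p` to the binary sequence
`0^{p 0} 1 0^{p 1} 1 0^{p 2} 1 ⋯`; that is, `v p k = true` iff
`k = p 0 + p 1 + ⋯ + p m + m` for some `m`. -/
noncomputable def vSeq (p : ℕ → ℕ) : ℕ → Bool :=
  fun k => decide (∃ m : ℕ, k = (Finset.range (m + 1)).sum p + m)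

/-- The translation `w : (ℕ → Bool) → (ℕ → ℕ)`: for `q` with infinitely many ones,
`w q` is the unique `p` with `v p = q`. -/
noncomputable def wSeq (q : ℕ → Bool) : ℕ → ℕ
  | 0 => Nat.nth (fun k => q k = true) 0
  | n + 1 => Nat.nth (fun k => q k = true) (n + 1) - Nat.nth (fun k => q k = true) n - 1

theorem IsTree.nil_mem {α : Type*} {T : Set (List α)} (hT : IsTree T) : [] ∈ T :=
  let ⟨σ, hσ⟩ := hT.1
  hT.2 σ hσ [] σ.nil_prefix

theorem ofFn_eq_map_range {α : Type*} (f : ℕ → α) (n : ℕ) :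
    List.ofFn (fun i : Fin n => f i) = (List.range n).map f := by
  apply List.ext_getElem <;> simp

theorem mem_body_iff_map_range_mem {α : Type*} {T : Set (List α)} {f : ℕ → α} :
    f ∈ body T ↔ ∀ n, (List.range n).map f ∈ T := by
  simp only [body, Set.mem_ofPred_eq, ofFn_eq_map_range]

theorem mem_body_iff_of_le {α : Type*} {T : Set (List α)}
    (hT : ∀ σ ∈ T, ∀ τ : List α, τ <+: σ → τ ∈ T) {s : ℕ → ℕ} (hs : ∀ n, n ≤ s n)
    (f : ℕ → α) : f ∈ body T ↔ ∀ n, (List.range (s n)).map f ∈ T := by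
  rw [mem_body_iff_map_range_mem]
  refine ⟨fun hf n => hf (s n), fun hf n => hT _ (hf n) _ ?_⟩
  have hrange : List.range n = (List.range (s n)).take n := by
    rw [List.take_range, min_eq_left (hs n)]
  rw [hrange]
  exact (List.take_prefix _ _).map f

theorem vList_append (σ τ : List ℕ) : vList (σ ++ τ) = vList σ ++ vList τ := by
  induction σ with
  | nil => rfl
  | cons a σ ih => simp [vList, ih]

theorem IsTree.setOf_vList_mem {T : Set (List Bool)} (hT : IsTree T) :
    IsTree {σ : List ℕ | vList σ ∈ T} := by
  refine ⟨⟨[], hT.nil_mem⟩, ?_⟩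
  rintro σ hσ τ ⟨ρ, rfl⟩
  exact hT.2 _ hσ _ ⟨vList ρ, (vList_append τ ρ).symm⟩

/-- The length of `vList` of the first `n` entries of `p`. -/
def vLength (p : ℕ → ℕ) (n : ℕ) : ℕ := (Finset.range n).sum p + n

theorem vLength_succ (p : ℕ → ℕ) (n : ℕ) : vLength p (n + 1) = vLength p n + (p n + 1) := by
  simp only [vLength, Finset.sum_range_succ]
  ring

theorem strictMono_vLength (p : ℕ → ℕ) : StrictMono (vLength p) :=
  strictMono_nat_of_lt_succ fun n => by rw [vLength_succ]; omega

theorem le_vLength (p : ℕ → ℕ) (n : ℕ) : n ≤ vLength p n :=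
  Nat.le_add_left n _

theorem vSeq_eq_true_iff (p : ℕ → ℕ) (k : ℕ) :
    vSeq p k = true ↔ ∃ m, k + 1 = vLength p (m + 1) := by
  simp only [vSeq, decide_eq_true_eq, vLength]
  exact exists_congr fun m => by omega

theorem vSeq_vLength_add (p : ℕ → ℕ) {n j : ℕ} (hj : j ≤ p n) :
    vSeq p (vLength p n + j) = decide (j = p n) := by
  by_cases hjn : j = p n
  · rw [decide_eq_true hjn, vSeq_eq_true_iff]
    exact ⟨n, by rw [vLength_succ, hjn, Nat.add_assoc]⟩
  · rw [decide_eq_false hjn, Bool.eq_false_iff]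
    intro h
    obtain ⟨m, hm⟩ := (vSeq_eq_true_iff p _).mp h
    have hlo : n < m + 1 := (strictMono_vLength p).lt_iff_lt.mp (by omega)
    have hhi : m + 1 < n + 1 :=
      (strictMono_vLength p).lt_iff_lt.mp (by rw [vLength_succ p n]; omega)
    omega

theorem vList_map_range (p : ℕ → ℕ) (n : ℕ) :
    vList ((List.range n).map p) = (List.range (vLength p n)).map (vSeq p) := by
  induction n with
  | zero => rfl
  | succ n ih =>
    have hzeros : (List.range (p n)).map (fun j => decide (j = p n)) =
        List.replicate (p n) false := by
      rw [List.map_congr_left fun j hj => decide_eq_false (List.mem_range.mp hj).ne,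
        List.map_const', List.length_range]
    have hblock : vList [p n] =
        (List.range (p n + 1)).map (fun j => vSeq p (vLength p n + j)) := by
      rw [List.range_succ, List.map_append,
        List.map_congr_left fun j hj => vSeq_vLength_add p (List.mem_range.mp hj).le]
      simp [vList, vSeq_vLength_add, hzeros]
    rw [List.range_succ, List.map_append, vList_append, ih, vLength_succ, List.range_add,
      List.map_append, List.map_map]
    exact congrArg _ hblock

theorem mem_body_setOf_vList_mem_iff {T : Set (List Bool)} (hT : IsTree T) (p : ℕ → ℕ) :
    p ∈ body {σ : List ℕ | vList σ ∈ T} ↔ vSeq p ∈ body T := by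
  rw [mem_body_iff_map_range_mem, mem_body_iff_of_le hT.2 (le_vLength p)]
  simp only [Set.mem_ofPred_eq, vList_map_range]

theorem vLength_wSeq {q : ℕ → Bool} (hq : {k | q k = true}.Infinite) (n : ℕ) :
    vLength (wSeq q) (n + 1) = Nat.nth (fun k => q k = true) n + 1 := by
  induction n with
  | zero => simp [vLength, wSeq]
  | succ n ih =>
    have hlt := Nat.nth_strictMono hq (Nat.lt_add_one n)
    rw [vLength_succ, ih]
    simp only [wSeq]
    omega

theorem vSeq_wSeq {q : ℕ → Bool} (hq : {k | q k = true}.Infinite) : vSeq (wSeq q) = q := by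
  funext k
  have hones : q k = true ↔ ∃ m, Nat.nth (fun k => q k = true) m = k := by
    rw [← Set.mem_range, Nat.range_nth_of_infinite hq]
    rfl
  rw [Bool.eq_iff_iff, vSeq_eq_true_iff, hones]
  simp only [vLength_wSeq hq, Nat.add_right_cancel_iff, eq_comm]

/-- For a binary tree `T`, its translation `w T = {σ : List ℕ | v σ ∈ T}` is a tree on `ℕ`;
for every `q` with infinitely many ones, `q ∈ [T]` iff `w q ∈ [w T]`; and for every `p`,
`p ∈ [w T]` iff `v p ∈ [T]`. -/
theorem baireTranslation_spec {T : Set (List Bool)} (hT : IsTree T) :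
    IsTree {σ : List ℕ | vList σ ∈ T} ∧
    (∀ q : ℕ → Bool, (∀ N : ℕ, ∃ k ≥ N, q k = true) →
      (q ∈ body T ↔ wSeq q ∈ body {σ : List ℕ | vList σ ∈ T})) ∧
    (∀ p : ℕ → ℕ, p ∈ body {σ : List ℕ | vList σ ∈ T} ↔ vSeq p ∈ body T) := by
  refine ⟨hT.setOf_vList_mem, fun q hq => ?_, mem_body_setOf_vList_mem_iff hT⟩
  have hinf : {k | q k = true}.Infinite :=
    Set.infinite_of_forall_exists_gt fun N =>
      let ⟨k, hk, hqk⟩ := hq (N + 1)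
      ⟨k, hqk, hk⟩
  rw [mem_body_setOf_vList_mem_iff hT, vSeq_wSeq hinf]
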